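/- The hexagonal (honeycomb) lattice graph is an isometric subgraph of ℤ^3: for all vertices x, y, the graph distance d(x,y) equals the ℓ1 distance |x₁−y₁| + |x₂−y₂| + |x₃−y₃|. -/

import Mathlib

/-!
The ℓ1 distance to `y` changes by at most one along an edge, so it is a lower bound for the graph
distance. Conversely, if `x ≠ y` lies on the level `x₁ + x₂ + x₃ = 0`, then the level of `y` is at
least that of `x`, so some coordinate of `x` is smaller than the corresponding one of `y`; raising
it by one gives a neighbour of `x` one step closer to `y` in ℓ1. On level `1` one lowers a
coordinate instead. Hence the ℓ1 distance is realised by a walk.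
-/

/-- The hexagonal (honeycomb) lattice graph: vertex set
`{x ∈ ℤ^3 : x₁ + x₂ + x₃ ∈ {0,1}}`, with `x` adjacent to `y` iff their ℓ1 distance
equals 1. -/
def hexagonalLattice :
    SimpleGraph {x : Fin 3 → ℤ // x 0 + x 1 + x 2 = 0 ∨ x 0 + x 1 + x 2 = 1} :=
  SimpleGraph.fromRel (fun x y => ∑ i, |x.val i - y.val i| = 1)

open Finset Function

namespace SimpleGraph

variable {V : Type*} {G : SimpleGraph V}

theorem le_length_add_of_forall_adj_le {f : V → ℕ} (hf : ∀ ⦃a b⦄, G.Adj a b → f a ≤ f b + 1)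
    {u v : V} (w : G.Walk u v) : f u ≤ w.length + f v := by
  induction w with
  | nil => simp
  | cons h _ ih =>
    rw [Walk.length_cons]
    have := hf h
    omega

theorem exists_walk_length_eq_of_exists_adj_succ {y : V} {f : V → ℕ}
    (hzero : ∀ v, f v = 0 → v = y) (hdesc : ∀ v, 0 < f v → ∃ u, G.Adj v u ∧ f u + 1 = f v) :
    ∀ v, ∃ w : G.Walk v y, w.length = f v := by
  suffices ∀ n v, f v = n → ∃ w : G.Walk v y, w.length = n from fun v => this _ v rfl
  intro n
  induction n with
  | zero => rintro v hv; obtain rfl := hzero v hv; exact ⟨.nil, rfl⟩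
  | succ n ih =>
    intro v hv
    obtain ⟨u, huv, hu⟩ := hdesc v (by omega)
    obtain ⟨w, hw⟩ := ih u (by omega)
    exact ⟨.cons huv w, by simp [hw]⟩

theorem dist_eq_of_forall_adj_le_of_exists_adj_succ {y : V} {f : V → ℕ}
    (hf : ∀ v, f v = 0 ↔ v = y) (hadj : ∀ ⦃a b⦄, G.Adj a b → f a ≤ f b + 1)
    (hdesc : ∀ v, 0 < f v → ∃ u, G.Adj v u ∧ f u + 1 = f v) (v : V) : G.dist v y = f v := by
  obtain ⟨w, hw⟩ := exists_walk_length_eq_of_exists_adj_succ (fun v => (hf v).1) hdesc v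
  obtain ⟨p, hp⟩ := Reachable.exists_walk_length_eq_dist ⟨w⟩
  have hfy : f y = 0 := (hf y).2 rfl
  have := le_length_add_of_forall_adj_le hadj p
  have := dist_le w
  omega

end SimpleGraph

section L1Dist

variable {ι : Type*} [Fintype ι]

theorem exists_lt_of_sum_le_of_ne {M : Type*} [AddCommMonoid M] [LinearOrder M]
    [IsOrderedCancelAddMonoid M] {x y : ι → M} (hsum : ∑ i, x i ≤ ∑ i, y i) (hne : x ≠ y) :
    ∃ i, x i < y i := by
  by_contra! h
  have hyx : ∀ i ∈ univ, y i ≤ x i := fun i _ => h i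
  have heq := (sum_eq_sum_iff_of_le hyx).1 (le_antisymm (sum_le_sum hyx) hsum)
  exact hne (funext fun i => (heq i (mem_univ i)).symm)

theorem sum_update_add {M : Type*} [AddCommMonoid M] [DecidableEq ι] (x : ι → M) (i : ι)
    (d : M) : ∑ j, update x i (x i + d) j = ∑ j, x j + d := by
  rw [sum_update_of_mem (mem_univ i), ← add_sum_erase _ _ (mem_univ i), sdiff_singleton_eq_erase,
    add_right_comm]

def l1Dist (x y : ι → ℤ) : ℕ := ∑ i, (x i - y i).natAbs

theorem sum_abs_sub_eq_l1Dist (x y : ι → ℤ) : ∑ i, |x i - y i| = (l1Dist x y : ℤ) := by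
  simp [l1Dist]

theorem l1Dist_comm (x y : ι → ℤ) : l1Dist x y = l1Dist y x := by
  simp only [l1Dist, ← Int.natAbs_neg (y _ - x _), neg_sub]

theorem l1Dist_triangle (x y z : ι → ℤ) : l1Dist x z ≤ l1Dist x y + l1Dist y z := by
  rw [l1Dist, l1Dist, l1Dist, ← sum_add_distrib]
  exact sum_le_sum fun i _ => by simpa using Int.natAbs_add_le (x i - y i) (y i - z i)

theorem l1Dist_eq_zero {x y : ι → ℤ} : l1Dist x y = 0 ↔ x = y := by
  simp [l1Dist, sum_eq_zero_iff, sub_eq_zero, funext_iff]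

variable [DecidableEq ι]

theorem l1Dist_update_add (x y : ι → ℤ) (i : ι) (a : ℤ) :
    l1Dist (update x i a) y + (x i - y i).natAbs = l1Dist x y + (a - y i).natAbs := by
  simp only [l1Dist, ← add_sum_erase _ _ (mem_univ i), update_self]
  rw [sum_congr rfl fun j hj => by rw [update_of_ne (ne_of_mem_erase hj)]]
  ring

theorem l1Dist_update_self (x : ι → ℤ) (i : ι) (a : ℤ) :
    l1Dist x (update x i a) = (a - x i).natAbs := by
  simpa [l1Dist_comm x, l1Dist_eq_zero.2 rfl] using l1Dist_update_add x x i a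

theorem l1Dist_update_step {x y : ι → ℤ} {i : ι} {d : ℤ}
    (hd : d = 1 ∧ x i < y i ∨ d = -1 ∧ y i < x i) :
    l1Dist (update x i (x i + d)) y + 1 = l1Dist x y := by
  have := l1Dist_update_add x y i (x i + d)
  omega

end L1Dist

abbrev HexVertex := {x : Fin 3 → ℤ // x 0 + x 1 + x 2 = 0 ∨ x 0 + x 1 + x 2 = 1}

theorem hexagonalLattice_adj_iff {x y : HexVertex} :
    hexagonalLattice.Adj x y ↔ l1Dist x.1 y.1 = 1 := by
  rw [hexagonalLattice, SimpleGraph.fromRel_adj, sum_abs_sub_eq_l1Dist, sum_abs_sub_eq_l1Dist,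
    l1Dist_comm y.1]
  refine ⟨fun h => by simpa using h.2, fun h => ⟨?_, .inl (by simp [h])⟩⟩
  rintro rfl
  simp [l1Dist_eq_zero.2] at h

theorem hexagonalLattice_exists_adj_l1Dist_succ {x y : HexVertex} (hne : x ≠ y) :
    ∃ z, hexagonalLattice.Adj x z ∧ l1Dist z.1 y.1 + 1 = l1Dist x.1 y.1 := by
  have hx := x.2
  have hy := y.2
  rw [← Fin.sum_univ_three x.1] at hx
  rw [← Fin.sum_univ_three y.1] at hy
  obtain ⟨i, d, hd, hsum⟩ : ∃ i d, (d = 1 ∧ x.1 i < y.1 i ∨ d = -1 ∧ y.1 i < x.1 i) ∧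
      (∑ j, x.1 j + d = 0 ∨ ∑ j, x.1 j + d = 1) := by
    rcases hx with hx | hx
    · obtain ⟨i, hi⟩ := exists_lt_of_sum_le_of_ne (by omega) (Subtype.coe_ne_coe.2 hne)
      exact ⟨i, 1, .inl ⟨rfl, hi⟩, by omega⟩
    · obtain ⟨i, hi⟩ := exists_lt_of_sum_le_of_ne (by omega) (Subtype.coe_ne_coe.2 hne.symm)
      exact ⟨i, -1, .inr ⟨rfl, hi⟩, by omega⟩
  refine ⟨⟨update x.1 i (x.1 i + d), by rwa [← Fin.sum_univ_three, sum_update_add]⟩, ?_,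
    l1Dist_update_step hd⟩
  rw [hexagonalLattice_adj_iff, l1Dist_update_self]
  omega

theorem hexagonalLattice_dist_eq_l1Dist (x y : HexVertex) :
    hexagonalLattice.dist x y = l1Dist x.1 y.1 := by
  refine SimpleGraph.dist_eq_of_forall_adj_le_of_exists_adj_succ (fun v => ?_) (fun a b hab => ?_)
    (fun v hv => hexagonalLattice_exists_adj_l1Dist_succ ?_) x
  · rw [l1Dist_eq_zero, Subtype.coe_inj]
  · simpa [hexagonalLattice_adj_iff.1 hab, add_comm] using l1Dist_triangle a.1 b.1 y.1
  · rintro rfl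
    simp [l1Dist_eq_zero.2] at hv

/-- The hexagonal lattice graph is an isometric subgraph of `ℤ^3`:
the graph distance equals the ℓ1 distance. -/
theorem hexagonalLattice_isometric
    (x y : {x : Fin 3 → ℤ // x 0 + x 1 + x 2 = 0 ∨ x 0 + x 1 + x 2 = 1}) :
    (hexagonalLattice.dist x y : ℤ) = ∑ i, |x.val i - y.val i| := by
  rw [hexagonalLattice_dist_eq_l1Dist, sum_abs_sub_eq_l1Dist]
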